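/- arXiv:2311.12888 — 2 statements merged into one kernel-verified Lean document; each statement's English description precedes it below -/
import Mathlib

section
/- Let h ∈ [μ, L] with 0 < μ ≤ L, η = 4/(√μ+√L)², β = ((√L−√μ)/(√L+√μ))². Then the quadratic λ² − (1+β−ηh)λ + β has complex conjugate roots of modulus exactly √β = (√L−√μ)/(√L+√μ), i.e., (1+β−ηh)² ≤ 4β. -/
/-!
Writing `s = √μ`, `t = √L`, the middle coefficient is `1 + β - η h = 2 (μ + L - 2h) / (s + t)²`
and `2√β = 2 (L - μ) / (s + t)²`, so the discriminant condition `(1 + β - η h)² ≤ 4β` reduces to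
`|μ + L - 2h| ≤ L - μ`, i.e. to `h ∈ [μ, L]`. A real quadratic `z² - c z + b` with `c² ≤ 4b` has the
roots `(c ± i√(4b - c²)) / 2`, both of squared modulus `b`.
-/

open Complex in
theorem Complex.normSq_eq_of_sq_sub_mul_add_eq_zero {c b : ℝ} (hdisc : c ^ 2 ≤ 4 * b) {z : ℂ}
    (hz : z ^ 2 - c * z + b = 0) : normSq z = b := by
  set d := Real.sqrt (4 * b - c ^ 2)
  have hd : d ^ 2 = 4 * b - c ^ 2 := Real.sq_sqrt (by linarith)
  have hsq : (2 * z - c) ^ 2 = (I * d) ^ 2 := by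
    rw [mul_pow, I_sq, ← ofReal_pow, hd]
    push_cast
    linear_combination 4 * hz
  have hz' : z = (c + I * d) / 2 ∨ z = (c - I * d) / 2 := by
    rcases sq_eq_sq_iff_eq_or_eq_neg.mp hsq with h | h
    · left; linear_combination h / 2
    · right; linear_combination h / 2
  rcases hz' with rfl | rfl <;>
  · simp only [normSq_apply, div_re, div_im, add_re, add_im, sub_re, sub_im, mul_re, mul_im,
      I_re, I_im, ofReal_re, ofReal_im]
    norm_num
    nlinarith [hd]

theorem Complex.norm_eq_sqrt_of_sq_sub_mul_add_eq_zero {c b : ℝ} (hdisc : c ^ 2 ≤ 4 * b) {z : ℂ}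
    (hz : z ^ 2 - c * z + b = 0) : ‖z‖ = Real.sqrt b := by
  rw [Complex.norm_def, Complex.normSq_eq_of_sq_sub_mul_add_eq_zero hdisc hz]

theorem heavyBall_discriminant_nonpos {s t h : ℝ} (hst : 0 < s + t) (hsh : s ^ 2 ≤ h)
    (hht : h ≤ t ^ 2) :
    (1 + ((t - s) / (t + s)) ^ 2 - 4 / (s + t) ^ 2 * h) ^ 2 ≤ 4 * ((t - s) / (t + s)) ^ 2 := by
  have hne : (s + t) ^ 2 ≠ 0 := by positivity
  have hcoef : 1 + ((t - s) / (t + s)) ^ 2 - 4 / (s + t) ^ 2 * h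
      = 2 * (s ^ 2 + t ^ 2 - 2 * h) / (s + t) ^ 2 := by
    rw [add_comm t s]; field_simp; ring
  have hbeta : 4 * ((t - s) / (t + s)) ^ 2 = (2 * (t ^ 2 - s ^ 2) / (s + t) ^ 2) ^ 2 := by
    rw [add_comm t s]; field_simp; ring
  rw [hcoef, hbeta]
  apply sq_le_sq'
  · rw [← neg_div]
    exact div_le_div_of_nonneg_right (by linarith) (by positivity)
  · exact div_le_div_of_nonneg_right (by linarith) (by positivity)

/-- Scalar heavy-ball characteristic polynomial: for h ∈ [μ, L] and the standard
    heavy-ball parameters, the discriminant is nonpositive, and both complex roots of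
    λ² - (1+β-ηh)λ + β have modulus exactly √β = (√L - √μ)/(√L + √μ). -/
theorem stmt_6 (μ L h η β : ℝ) (hμ : 0 < μ) (hμL : μ ≤ L)
    (hh : h ∈ Set.Icc μ L)
    (hη : η = 4 / (Real.sqrt μ + Real.sqrt L) ^ 2)
    (hβ : β = ((Real.sqrt L - Real.sqrt μ) / (Real.sqrt L + Real.sqrt μ)) ^ 2) :
    (1 + β - η * h) ^ 2 ≤ 4 * β ∧
      Real.sqrt β = (Real.sqrt L - Real.sqrt μ) / (Real.sqrt L + Real.sqrt μ) ∧
      ∀ lam : ℂ, lam ^ 2 - ((1 + β - η * h : ℝ) : ℂ) * lam + ((β : ℝ) : ℂ) = 0 →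
        ‖lam‖ = Real.sqrt β := by
  have hsum : 0 < Real.sqrt μ + Real.sqrt L := by
    have := Real.sqrt_pos.mpr hμ; positivity
  have hdisc : (1 + β - η * h) ^ 2 ≤ 4 * β := by
    rw [hη, hβ]
    apply heavyBall_discriminant_nonpos hsum
    · rw [Real.sq_sqrt hμ.le]; exact hh.1
    · rw [Real.sq_sqrt (hμ.le.trans hμL)]; exact hh.2
  refine ⟨hdisc, ?_, fun lam hlam => ?_⟩
  · rw [hβ, Real.sqrt_sq (div_nonneg (sub_nonneg.mpr (Real.sqrt_le_sqrt hμL)) (by positivity))]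
  · exact Complex.norm_eq_sqrt_of_sq_sub_mul_add_eq_zero hdisc hlam
end

section
/- Let H be symmetric with μI ⪯ H ⪯ LI, 0 < μ ≤ L, η = 1/L and β = (√L−√μ)/(√L+√μ) (more precisely β = (√κ−1)/(√κ+1) with κ = L/μ). Then each eigenvalue λ of M₂ = [[(1+β)(I−ηH), −β(I−ηH)],[I,0]] satisfies |λ| ≤ 1 − √(μ/L). -/
/-!
An eigenvector of `M₂` for an eigenvalue `λ ≠ 0` has the form `(λ y, y)` with `H y = h y`
for some `h ∈ [μ, L]`. Writing `a = 1 - h / L ∈ [0, 1 - μ / L]`, the eigenvalue `λ` is a root of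
`λ² - (1 + β) a λ + β a`. The choice of `β` makes `(1 + β)² (1 - μ / L) = 4 β`, so the
discriminant `(1 + β)² a² - 4 β a` is nonpositive, the two roots are conjugate (or equal), and
`|λ|² = β a ≤ β (1 - μ / L) = (1 - √(μ / L))²`.
-/

open Matrix
open scoped ComplexOrder

variable {n : Type*} [Fintype n] [DecidableEq n]

theorem Matrix.mem_spectrum_iff_exists_mulVec_eq_smul {K : Type*} [Field K]
    {A : Matrix n n K} {c : K} :
    c ∈ spectrum K A ↔ ∃ v ≠ 0, A *ᵥ v = c • v := by
  rw [← Matrix.spectrum_toLin', ← Module.End.hasEigenvalue_iff_mem_spectrum]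
  constructor
  · intro h
    obtain ⟨v, hv⟩ := h.exists_hasEigenvector
    exact ⟨v, hv.2, by simpa using hv.apply_eq_smul⟩
  · rintro ⟨v, hv0, hv⟩
    exact Module.End.hasEigenvalue_of_hasEigenvector
      ⟨by simpa [Module.End.mem_eigenspace_iff] using hv, hv0⟩

theorem Matrix.exists_mem_spectrum_of_mem_spectrum_fromBlocks_smul {K : Type*} [Field K]
    {A : Matrix n n K} {p q lam : K}
    (hlam : lam ∈ spectrum K (fromBlocks (p • A) (q • A) (1 : Matrix n n K) 0))
    (hlam0 : lam ≠ 0) :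
    ∃ ν ∈ spectrum K A, lam ^ 2 = (p * lam + q) * ν := by
  obtain ⟨v, hv0, hv⟩ := mem_spectrum_iff_exists_mulVec_eq_smul.mp hlam
  set y := v ∘ Sum.inr
  have hx : v ∘ Sum.inl = lam • y := by
    funext i
    simpa [fromBlocks_mulVec, y] using congrFun hv (Sum.inr i)
  have hAy : (p * lam + q) • (A *ᵥ y) = lam ^ 2 • y := by
    have top : (p • A) *ᵥ (v ∘ Sum.inl) + (q • A) *ᵥ y = lam • (v ∘ Sum.inl) := by
      funext i
      simpa [fromBlocks_mulVec, y] using congrFun hv (Sum.inl i)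
    rw [hx, smul_mulVec, smul_mulVec, mulVec_smul] at top
    rw [sq, mul_smul, ← top]
    module
  have hy0 : y ≠ 0 := by
    rintro hy
    apply hv0
    ext (i | i)
    · simpa [hy] using congrFun hx i
    · exact congrFun hy i
  have hd : p * lam + q ≠ 0 := by
    rintro hd
    rw [hd, zero_smul, eq_comm, smul_eq_zero] at hAy
    exact hAy.elim (pow_ne_zero 2 hlam0) hy0
  refine ⟨lam ^ 2 / (p * lam + q),
    mem_spectrum_iff_exists_mulVec_eq_smul.mpr ⟨y, hy0, ?_⟩, (mul_div_cancel₀ _ hd).symm⟩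
  rw [div_eq_inv_mul, mul_smul, ← hAy, smul_smul, inv_mul_cancel₀ hd, one_smul]

def nesterovMatrix {R : Type*} [CommRing R] (β η : R) (H : Matrix n n R) :
    Matrix (n ⊕ n) (n ⊕ n) R :=
  fromBlocks ((1 + β) • (1 - η • H)) ((-β) • (1 - η • H)) 1 0

omit [Fintype n] in
theorem nesterovMatrix_map {R S : Type*} [CommRing R] [CommRing S] (f : R →+* S) (β η : R)
    (H : Matrix n n R) :
    (nesterovMatrix β η H).map f = nesterovMatrix (f β) (f η) (H.map f) := by
  rw [nesterovMatrix, nesterovMatrix, fromBlocks_map]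
  congr 1 <;> ext i j <;> by_cases hij : i = j <;> simp [one_apply, hij]

theorem spectrum.exists_eq_one_sub_mul_of_mem_one_sub_smul {R A : Type*} [Field R] [Ring A]
    [Algebra R A] {a : A} {η ν : R} (hη : η ≠ 0) (hν : ν ∈ spectrum R (1 - η • a)) :
    ∃ x ∈ spectrum R a, ν = 1 - η * x := by
  rw [← map_one (algebraMap R A), ← Units.smul_mk0 hη, ← spectrum.singleton_sub_eq,
    spectrum.unit_smul_eq_smul] at hν
  obtain ⟨_, rfl, _, ⟨x, hx, rfl⟩, rfl⟩ := hν
  exact ⟨x, hx, rfl⟩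

omit [DecidableEq n] in
theorem Matrix.PosSemidef.map_ofReal {M : Matrix n n ℝ}
    (hM : M.PosSemidef) : (M.map (algebraMap ℝ ℂ)).PosSemidef := by
  obtain ⟨k, v, rfl⟩ := posSemidef_iff_eq_sum_vecMulVec.mp hM
  refine posSemidef_iff_eq_sum_vecMulVec.mpr ⟨k, fun i j ↦ (v i j : ℂ), ?_⟩
  ext i j
  simp [sum_apply, vecMulVec_apply]

theorem Matrix.PosSemidef.nonneg_of_mem_spectrum_map {M : Matrix n n ℝ} (hM : M.PosSemidef)
    {c : ℂ} (hc : c ∈ spectrum ℂ (M.map (algebraMap ℝ ℂ))) : 0 ≤ c :=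
  (posSemidef_iff_isHermitian_and_spectrum_nonneg.mp hM.map_ofReal).2 hc

theorem Matrix.map_smul_one_ofReal (r : ℝ) :
    (r • 1 : Matrix n n ℝ).map (algebraMap ℝ ℂ) = algebraMap ℂ (Matrix n n ℂ) r := by
  ext i j
  by_cases hij : i = j <;> simp [algebraMap_matrix_apply, hij]

theorem Matrix.exists_mem_Icc_of_mem_spectrum_map {μ L : ℝ} {H : Matrix n n ℝ}
    (hlow : (H - μ • 1).PosSemidef) (hup : (L • 1 - H).PosSemidef) {h : ℂ}
    (hh : h ∈ spectrum ℂ (H.map (algebraMap ℝ ℂ))) : ∃ t ∈ Set.Icc μ L, h = t := by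
  have hμ : 0 ≤ h - μ := hlow.nonneg_of_mem_spectrum_map <| by
    rw [Matrix.map_sub _ (map_sub _), map_smul_one_ofReal, ← spectrum.sub_singleton_eq]
    exact Set.sub_mem_sub hh rfl
  have hL : 0 ≤ (L : ℂ) - h := hup.nonneg_of_mem_spectrum_map <| by
    rw [Matrix.map_sub _ (map_sub _), map_smul_one_ofReal, ← spectrum.singleton_sub_eq]
    exact Set.sub_mem_sub rfl hh
  rw [Complex.nonneg_iff] at hμ hL
  simp only [Complex.sub_re, Complex.sub_im, Complex.ofReal_re, Complex.ofReal_im,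
    sub_zero] at hμ hL
  exact ⟨h.re, ⟨by linarith, by linarith⟩, Complex.ext rfl hμ.2.symm⟩

theorem Complex.sq_norm_eq_of_sq_sub_mul_add_eq_zero {b c : ℝ} {z : ℂ} (hd : b ^ 2 ≤ 4 * c)
    (hz : z ^ 2 - b * z + c = 0) : ‖z‖ ^ 2 = c := by
  have hre : z.re ^ 2 - z.im ^ 2 - b * z.re + c = 0 := by
    simpa [sq] using congrArg Complex.re hz
  have him : z.im * (2 * z.re - b) = 0 := by
    have := congrArg Complex.im hz
    simp only [sq, Complex.add_im, Complex.sub_im, Complex.mul_im, Complex.ofReal_re,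
      Complex.ofReal_im, zero_mul, add_zero, Complex.zero_im] at this
    linear_combination this
  have hb : 2 * z.re - b = 0 := by
    rcases mul_eq_zero.mp him with h | h
    · -- a real root forces `(2 z - b)² = b² - 4 c ≤ 0`
      rw [h] at hre
      exact pow_eq_zero_iff two_ne_zero |>.mp <| by nlinarith [sq_nonneg (2 * z.re - b)]
    · exact h
  rw [Complex.sq_norm, Complex.normSq_apply]
  linear_combination z.re * hb - hre

theorem norm_le_one_sub_of_nesterov_char_root {s a β : ℝ} {z : ℂ} (hs : 0 ≤ s)
    (hβ : β = (1 - s) / (1 + s)) (ha₀ : 0 ≤ a) (ha : a ≤ 1 - s ^ 2)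
    (hz : z ^ 2 - ((1 + β) * a : ℝ) * z + (β * a : ℝ) = 0) : ‖z‖ ≤ 1 - s := by
  have hs₁ : s ≤ 1 := by nlinarith
  have hβ₀ : 0 ≤ β := hβ ▸ div_nonneg (by linarith) (by linarith)
  have hdisc : (1 + β) ^ 2 * (1 - s ^ 2) = 4 * β := by rw [hβ]; field_simp; ring
  have hconst : β * (1 - s ^ 2) = (1 - s) ^ 2 := by rw [hβ]; field_simp; ring
  have hnorm := Complex.sq_norm_eq_of_sq_sub_mul_add_eq_zero (by
    nlinarith [hdisc, mul_le_mul_of_nonneg_left ha (mul_nonneg (sq_nonneg (1 + β)) ha₀)]) hz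
  refine pow_le_pow_iff_left₀ (norm_nonneg z) (by linarith) two_ne_zero |>.mp ?_
  rw [hnorm, ← hconst]
  exact mul_le_mul_of_nonneg_left ha hβ₀

theorem stmt_16_general (n : ℕ) (μ L η β : ℝ) (hμ : 0 < μ) (hμL : μ ≤ L)
    (hη : η = 1 / L)
    (hβ : β = (Real.sqrt (L / μ) - 1) / (Real.sqrt (L / μ) + 1))
    (H : Matrix (Fin n) (Fin n) ℝ)
    (hlow : (H - μ • (1 : Matrix (Fin n) (Fin n) ℝ)).PosSemidef)
    (hup : (L • (1 : Matrix (Fin n) (Fin n) ℝ) - H).PosSemidef) :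
    ∀ lam ∈ spectrum ℂ
        ((Matrix.fromBlocks
            ((1 + β) • ((1 : Matrix (Fin n) (Fin n) ℝ) - η • H))
            ((-β) • ((1 : Matrix (Fin n) (Fin n) ℝ) - η • H)) 1 0).map (algebraMap ℝ ℂ) : Matrix (Fin n ⊕ Fin n) (Fin n ⊕ Fin n) ℂ),
      ‖lam‖ ≤ 1 - Real.sqrt (μ / L) := by
  intro lam hlam
  have hL : 0 < L := hμ.trans_le hμL
  have hs : 0 < Real.sqrt (μ / L) := Real.sqrt_pos.mpr (div_pos hμ hL)
  have hβs : β = (1 - Real.sqrt (μ / L)) / (1 + Real.sqrt (μ / L)) := by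
    rw [hβ, ← inv_div μ L, Real.sqrt_inv]
    field_simp
  rcases eq_or_ne lam 0 with rfl | hlam0
  · simpa using Real.sqrt_le_one.mpr ((div_le_one hL).mpr hμL)
  rw [← nesterovMatrix, nesterovMatrix_map] at hlam
  obtain ⟨ν, hν, hquad⟩ := exists_mem_spectrum_of_mem_spectrum_fromBlocks_smul hlam hlam0
  obtain ⟨h, hh, rfl⟩ :=
    spectrum.exists_eq_one_sub_mul_of_mem_one_sub_smul (by simp [hη, hL.ne']) hν
  obtain ⟨t, ⟨hμt, htL⟩, rfl⟩ := exists_mem_Icc_of_mem_spectrum_map hlow hup hh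
  refine norm_le_one_sub_of_nesterov_char_root (a := 1 - η * t) hs.le hβs ?_ ?_ ?_
  · rw [hη, one_div_mul_eq_div, sub_nonneg]
    exact (div_le_one hL).mpr htL
  · rw [Real.sq_sqrt (div_pos hμ hL).le, hη, one_div_mul_eq_div]
    gcongr
  · push_cast
    linear_combination hquad

/-- Spectral radius bound for the Nesterov iteration matrix. -/
theorem stmt_16 (n : ℕ) (μ L η β : ℝ) (hμ : 0 < μ) (hμL : μ ≤ L)
    (hη : η = 1 / L)
    (hβ : β = (Real.sqrt (L / μ) - 1) / (Real.sqrt (L / μ) + 1))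
    (H : Matrix (Fin n) (Fin n) ℝ) (hsymm : H.IsSymm)
    (hlow : (H - μ • (1 : Matrix (Fin n) (Fin n) ℝ)).PosSemidef)
    (hup : (L • (1 : Matrix (Fin n) (Fin n) ℝ) - H).PosSemidef) :
    ∀ lam ∈ spectrum ℂ
        ((Matrix.fromBlocks
            ((1 + β) • ((1 : Matrix (Fin n) (Fin n) ℝ) - η • H))
            ((-β) • ((1 : Matrix (Fin n) (Fin n) ℝ) - η • H)) 1 0).map (algebraMap ℝ ℂ) : Matrix (Fin n ⊕ Fin n) (Fin n ⊕ Fin n) ℂ),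
      ‖lam‖ ≤ 1 - Real.sqrt (μ / L) :=
  stmt_16_general n μ L η β hμ hμL hη hβ H hlow hup
end
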